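/- arXiv:1205.3762 — 6 statements merged into one kernel-verified Lean document; each statement's English description precedes it below -/
import Mathlib

section
/- Let λ and μ be partitions of an integer k, and let l ≥ 0 be an integer. Let λ' be the partition obtained by inserting l as a new part into λ (reordering to keep parts decreasing), and similarly μ' obtained from μ. Then λ ⊴ μ if and only if λ' ⊴ μ'. -/
/-!
Write `S_M(d)` for the sum of the `d` largest parts of `M`. Inserting a part `l` gives
`S_{l::M}(d + 1) = max (S_M(d + 1)) (l + S_M(d))`, so `M ⊴ M'` implies `l::M ⊴ l::M'` by
monotonicity of `max`. Conversely, `S_{M'}` is concave because the parts are sorted decreasingly,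
and concavity lets the recursion at `d` and `d + 1` recover `S_M(d + 1) ≤ S_{M'}(d + 1)`.
-/

/-- Decreasing enumeration of a multiset of natural numbers. -/
def dsort (M : Multiset ℕ) : List ℕ := (M.sort (· ≤ ·)).reverse

/-- Dominance order on multisets of naturals (of the same size and sum):
partial sums of the decreasing enumerations. -/
def MDom (M M' : Multiset ℕ) : Prop :=
  ∀ d, ((dsort M).take d).sum ≤ ((dsort M').take d).sum

namespace List

lemma sum_take_add_one_eq (a : List ℕ) (d : ℕ) :
    (a.take (d + 1)).sum = (a.take d).sum + a[d]?.getD 0 := by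
  rw [take_add_one]
  cases a[d]? <;> simp

lemma getD_getElem?_le_of_forall_le {a : List ℕ} {c : ℕ} (h : ∀ y ∈ a, y ≤ c) (d : ℕ) :
    a[d]?.getD 0 ≤ c := by
  cases hd : a[d]? with
  | none => simp
  | some y => exact h y (mem_of_getElem? hd)

lemma getD_getElem?_add_one_le {a : List ℕ} (ha : a.Pairwise (· ≥ ·)) (d : ℕ) :
    a[d + 1]?.getD 0 ≤ a[d]?.getD 0 := by
  by_cases hd : d + 1 < a.length
  · simp only [getElem?_eq_getElem hd, getElem?_eq_getElem (Nat.lt_of_succ_lt hd),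
      Option.getD_some]
    exact pairwise_iff_getElem.1 ha d (d + 1) _ hd (Nat.lt_succ_self d)
  · simp [getElem?_eq_none (Nat.le_of_not_lt hd)]

lemma sum_take_add_two_add_sum_take_le {a : List ℕ} (ha : a.Pairwise (· ≥ ·)) (d : ℕ) :
    (a.take (d + 2)).sum + (a.take d).sum ≤ 2 * (a.take (d + 1)).sum := by
  have := getD_getElem?_add_one_le ha d
  rw [sum_take_add_one_eq _ (d + 1), sum_take_add_one_eq]
  omega

lemma sum_take_orderedInsert_add_one {t : List ℕ} (ht : t.Pairwise (· ≥ ·)) (l d : ℕ) :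
    ((t.orderedInsert (· ≥ ·) l).take (d + 1)).sum =
      max (t.take (d + 1)).sum (l + (t.take d).sum) := by
  induction t generalizing d with
  | nil => simp
  | cons x t ih =>
    by_cases hlx : l ≥ x
    · have hle : ∀ y ∈ x :: t, y ≤ l := fun y hy =>
        (mem_cons.1 hy).elim (· ▸ hlx) fun hy => (rel_of_pairwise_cons ht hy).trans hlx
      have := getD_getElem?_le_of_forall_le hle d
      rw [orderedInsert_cons_of_le _ _ hlx, take_succ_cons, sum_cons,
        sum_take_add_one_eq (x :: t)]
      omega
    · rw [orderedInsert_of_not_le _ _ hlx]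
      cases d with
      | zero =>
        simp only [take_succ_cons, take_zero, sum_cons, sum_nil, add_zero]
        omega
      | succ d =>
        simp only [take_succ_cons, sum_cons, ih ht.of_cons d]
        omega

end List

lemma dsort_pairwise (M : Multiset ℕ) : (dsort M).Pairwise (· ≥ ·) :=
  List.pairwise_reverse.2 (Multiset.pairwise_sort M (· ≤ ·))

lemma coe_dsort (M : Multiset ℕ) : (dsort M : Multiset ℕ) = M := by
  rw [dsort, Multiset.coe_reverse, Multiset.sort_eq]

lemma dsort_cons (l : ℕ) (M : Multiset ℕ) :
    dsort (l ::ₘ M) = (dsort M).orderedInsert (· ≥ ·) l := by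
  refine List.Perm.eq_of_pairwise' (dsort_pairwise _) ((dsort_pairwise M).orderedInsert l _) ?_
  rw [← Multiset.coe_eq_coe, Multiset.coe_eq_coe.2 (List.perm_orderedInsert _ l _),
    ← Multiset.cons_coe, coe_dsort, coe_dsort]

def topSum (M : Multiset ℕ) (d : ℕ) : ℕ := ((dsort M).take d).sum

lemma topSum_zero (M : Multiset ℕ) : topSum M 0 = 0 := by
  simp [topSum]

lemma topSum_cons_add_one (l : ℕ) (M : Multiset ℕ) (d : ℕ) :
    topSum (l ::ₘ M) (d + 1) = max (topSum M (d + 1)) (l + topSum M d) := by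
  rw [topSum, dsort_cons, List.sum_take_orderedInsert_add_one (dsort_pairwise M)]
  rfl

lemma topSum_add_two_add_topSum_le (M : Multiset ℕ) (d : ℕ) :
    topSum M (d + 2) + topSum M d ≤ 2 * topSum M (d + 1) :=
  List.sum_take_add_two_add_sum_take_le (dsort_pairwise M) d

lemma mDom_iff_topSum_le {M M' : Multiset ℕ} : MDom M M' ↔ ∀ d, topSum M d ≤ topSum M' d :=
  Iff.rfl

/-- If `A (d + 1) > B (d + 1)`, the comparison at `d + 1` forces `B (d + 2) ≥ l + A (d + 1)`; by
concavity the increment `B (d + 1) - B d` then exceeds `l`, so the comparison at `d` yields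
`A (d + 1) ≤ B (d + 1)`. -/
lemma Nat.le_of_max_add_one_le_max_add_one {A B : ℕ → ℕ} (l : ℕ) (h₀ : A 0 ≤ B 0)
    (hB : ∀ i, B (i + 2) + B i ≤ 2 * B (i + 1))
    (h : ∀ i, max (A (i + 1)) (l + A i) ≤ max (B (i + 1)) (l + B i)) (d : ℕ) : A d ≤ B d := by
  cases d with
  | zero => exact h₀
  | succ d =>
    have := h d
    have : max (A (d + 2)) (l + A (d + 1)) ≤ max (B (d + 2)) (l + B (d + 1)) := h (d + 1)
    have := hB d
    omega

theorem dominance_insert_part_general (l : ℕ) (M M' : Multiset ℕ) :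
    MDom M M' ↔ MDom (l ::ₘ M) (l ::ₘ M') := by
  simp only [mDom_iff_topSum_le]
  constructor
  · rintro h (_ | d)
    · simp only [topSum_zero, le_refl]
    · rw [topSum_cons_add_one, topSum_cons_add_one]
      exact max_le_max (h (d + 1)) (Nat.add_le_add_left (h d) l)
  · intro h
    refine Nat.le_of_max_add_one_le_max_add_one l (by simp only [topSum_zero, le_refl])
      (topSum_add_two_add_topSum_le M') fun i => ?_
    simpa only [topSum_cons_add_one] using h (i + 1)

theorem dominance_insert_part (k l : ℕ) (M M' : Multiset ℕ)
    (hM : M.sum = k) (hM' : M'.sum = k) :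
    MDom M M' ↔ MDom (l ::ₘ M) (l ::ₘ M') :=
  dominance_insert_part_general l M M'
end

section
/- Let Z' = {z'_1 ≥ … ≥ z'_m} be a multiset of nonnegative integers in which no entry is repeated more than twice, and let Z = {z_1 ≥ … ≥ z_m} be another such multiset with the same sum and Z ⊴ Z', Z ≠ Z'. Let k be minimal with z_k < z'_k and let l > k be minimal with Σ_{i≤l} z_i = Σ_{i≤l} z'_i. Then the multiset Z'' obtained from Z by replacing z_k with z_k+1 and z_l with z_l−1 is weakly decreasing, has no entry repeated more than twice, and satisfies Z ⊴ Z'' ⊴ Z'. -/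
/-!
Between `k` and `l` the partial sums of `Z` stay strictly below those of `Z'`, so moving one unit
from position `l` to position `k` keeps `Z'' ⊴ Z'`. Monotonicity survives because
`z_i = z'_i ≥ z'_k > z_k` for `i < k`, and `z_{l+1} ≤ z'_{l+1} ≤ z'_l < z_l` since the partial sums
of `Z` and `Z'` agree at `l + 1`. Finally, if `z_k + 1` or `z_l - 1` already occurred twice in `Z`,
the same constraints would force three equal entries of `Z'`.
-/

/-- Dominance order on lists of naturals (same length, same sum):
partial sums of the first list are bounded by those of the second. -/
def LDom (L L' : List ℕ) : Prop := ∀ d, (L.take d).sum ≤ (L'.take d).sum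

open Finset Function

namespace List

theorem sum_take_eq_sum_range_getD {M : Type*} [AddCommMonoid M] (L : List M) (d : ℕ) :
    (L.take d).sum = ∑ i ∈ Finset.range d, L.getD i 0 := by
  induction d with
  | zero => simp
  | succ d ih =>
    rw [take_add_one, sum_append, ih, Finset.sum_range_succ, getD_eq_getElem?_getD]
    cases L[d]? <;> simp

theorem pairwise_ge_iff_antitone_getD (L : List ℕ) :
    L.Pairwise (· ≥ ·) ↔ Antitone (L.getD · 0) := by
  rw [pairwise_iff_getElem]
  constructor
  · intro h i j hij
    beta_reduce
    rcases lt_or_ge j L.length with hj | hj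
    · rcases hij.lt_or_eq with hij | rfl
      · rw [getD_eq_getElem _ _ hj, getD_eq_getElem _ _ (hij.trans hj)]
        exact h i j (hij.trans hj) hj hij
      · exact le_rfl
    · rw [getD_eq_default _ _ hj]
      exact Nat.zero_le _
  · intro h i j hi hj hij
    have := h hij.le
    beta_reduce at this
    rwa [getD_eq_getElem _ _ hi, getD_eq_getElem _ _ hj] at this

theorem getD_set_of_lt {α : Type*} (L : List α) (d : α) {k : ℕ} (hk : k < L.length) (x : α) :
    ((L.set k x).getD · d) = update (L.getD · d) k x := by
  funext i
  rcases eq_or_ne i k with rfl | hik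
  · simp [hk]
  · simp [hik.symm, update_of_ne hik]

theorem count_set_set_le_two {α : Type*} [BEq α] [LawfulBEq α] {L : List α} {x y : α}
    (hxy : x ≠ y) (hc : ∀ v, L.count v ≤ 2) (hx : L.count x ≤ 1) (hy : L.count y ≤ 1)
    (i j : ℕ) (v : α) : ((L.set i x).set j y).count v ≤ 2 := by
  have count_set_le (L : List α) (i : ℕ) (z : α) :
      (L.set i z).count v ≤ L.count v + if (z == v) = true then 1 else 0 := by
    rcases lt_or_ge i L.length with hi | hi
    · rw [count_set hi]; omega
    · rw [set_eq_of_length_le hi]; omega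
  have h1 := count_set_le L i x
  have h2 := count_set_le (L.set i x) j y
  by_cases hvx : x = v
  · subst hvx
    simp only [BEq.rfl, ↓reduceIte, beq_iff_eq, Ne.symm hxy, add_zero] at h1 h2
    omega
  · by_cases hvy : y = v
    · subst hvy
      simp only [beq_iff_eq, hvx, ↓reduceIte, add_zero, BEq.rfl] at h1 h2
      omega
    · simp only [beq_iff_eq, hvx, ↓reduceIte, add_zero, hvy] at h1 h2
      have := hc v
      omega

theorem exists_lt_getD_eq_of_two_le_count {α : Type*} [BEq α] [LawfulBEq α] {L : List α}
    {v : α} (d : α) (h : 2 ≤ L.count v) :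
    ∃ i j, i < j ∧ j < L.length ∧ L.getD i d = v ∧ L.getD j d = v := by
  obtain ⟨is, his, hsorted⟩ := sublist_eq_map_getElem (replicate_sublist_iff.2 h)
  obtain ⟨i, j, rfl⟩ : ∃ i j, is = [i, j] :=
    length_eq_two.1 (by simpa using (congrArg length his).symm)
  simp only [replicate, map_cons, map_nil, cons.injEq, and_true] at his
  refine ⟨i, j, by simpa using hsorted, j.isLt, ?_, ?_⟩
  · simp [his.1]
  · simp [his.2]

theorem three_le_count_of_getD_eq {α : Type*} [BEq α] [LawfulBEq α] {L : List α} {v d : α}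
    {i j k : ℕ} (hij : i < j) (hjk : j < k) (hk : k < L.length)
    (hi : L.getD i d = v) (hj : L.getD j d = v) (hk' : L.getD k d = v) : 3 ≤ L.count v := by
  rw [← replicate_sublist_iff]
  have := map_getElem_sublist (l := L) (is := [⟨i, by omega⟩, ⟨j, by omega⟩, ⟨k, hk⟩])
    (by simp [hij, hjk, hij.trans hjk])
  rw [getD_eq_getElem _ _ (by omega)] at hi hj hk'
  simpa [hi, hj, hk', replicate] using this

end List

def moveUnit (f : ℕ → ℕ) (k l : ℕ) : ℕ → ℕ := update (update f k (f k + 1)) l (f l - 1)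

theorem sum_range_update_add {M : Type*} [AddCommMonoid M] (f : ℕ → M) (i : ℕ) (x : M)
    (d : ℕ) :
    ∑ j ∈ range d, update f i x j + (if i < d then f i else 0)
      = ∑ j ∈ range d, f j + if i < d then x else 0 := by
  by_cases hid : i < d
  · have hi : i ∈ range d := mem_range.2 hid
    rw [sum_update_of_mem hi, ← add_sum_erase _ _ hi, sdiff_singleton_eq_erase]
    simp only [hid, if_true]
    abel
  · rw [sum_update_of_notMem (by simpa using hid)]
    simp [hid]

theorem sum_range_moveUnit {f : ℕ → ℕ} {k l : ℕ} (hkl : k < l) (hl : 0 < f l) (d : ℕ) :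
    ∑ i ∈ range d, moveUnit f k l i =
      ∑ i ∈ range d, f i + if k < d ∧ d ≤ l then 1 else 0 := by
  have hk := sum_range_update_add f k (f k + 1) d
  have hl' := sum_range_update_add (update f k (f k + 1)) l (f l - 1) d
  rw [update_of_ne hkl.ne'] at hl'
  unfold moveUnit
  split_ifs at hk hl' ⊢ <;> omega

theorem antitone_moveUnit {f : ℕ → ℕ} {k l : ℕ} (hf : Antitone f) (hkl : k < l)
    (hk : ∀ i < k, f k < f i) (hl : f (l + 1) < f l) : Antitone (moveUnit f k l) := by
  refine antitone_nat_of_succ_le fun n => ?_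
  have hn : f (n + 1) ≤ f n := hf n.le_succ
  have hkl' := hf hkl.le
  have hk' : n + 1 ≠ k ∨ f k < f n := (em _).imp_right fun h => hk n (by omega)
  simp only [moveUnit, update_apply]
  split_ifs <;> subst_vars <;> omega

theorem apply_le_of_sum_range_eq {f g : ℕ → ℕ}
    (hdom : ∀ d, ∑ i ∈ range d, f i ≤ ∑ i ∈ range d, g i) {d : ℕ}
    (heq : ∑ i ∈ range d, f i = ∑ i ∈ range d, g i) : f d ≤ g d := by
  have hle := hdom (d + 1)
  rw [sum_range_succ, sum_range_succ, heq] at hle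
  omega

structure IsFirstGap (f g : ℕ → ℕ) (k l : ℕ) : Prop where
  eq_of_lt : ∀ i < k, f i = g i
  apply_lt : f k < g k
  lt : k < l
  sum_range_eq : ∑ i ∈ range (l + 1), f i = ∑ i ∈ range (l + 1), g i
  sum_range_ne : ∀ j, k < j → j < l → ∑ i ∈ range (j + 1), f i ≠ ∑ i ∈ range (j + 1), g i

namespace IsFirstGap

variable {f g : ℕ → ℕ} {k l : ℕ}

theorem sum_range_lt (h : IsFirstGap f g k l)
    (hdom : ∀ d, ∑ i ∈ range d, f i ≤ ∑ i ∈ range d, g i) {d : ℕ} (hkd : k < d) (hdl : d ≤ l) :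
    ∑ i ∈ range d, f i < ∑ i ∈ range d, g i := by
  rcases (Nat.succ_le_of_lt hkd).eq_or_lt with rfl | hkd
  · rw [sum_range_succ, sum_range_succ,
      sum_congr rfl fun i hi => h.eq_of_lt i (mem_range.1 hi)]
    exact Nat.add_lt_add_left h.apply_lt _
  · obtain ⟨j, rfl⟩ : ∃ j, d = j + 1 := ⟨d - 1, by omega⟩
    exact (hdom _).lt_of_ne (h.sum_range_ne j (by omega) (by omega))

theorem apply_right_lt (h : IsFirstGap f g k l)
    (hdom : ∀ d, ∑ i ∈ range d, f i ≤ ∑ i ∈ range d, g i) : g l < f l := by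
  have hlt := h.sum_range_lt hdom h.lt le_rfl
  have heq := h.sum_range_eq
  rw [sum_range_succ, sum_range_succ] at heq
  omega

theorem apply_succ_right_le (h : IsFirstGap f g k l)
    (hdom : ∀ d, ∑ i ∈ range d, f i ≤ ∑ i ∈ range d, g i) : f (l + 1) ≤ g (l + 1) :=
  apply_le_of_sum_range_eq hdom h.sum_range_eq

theorem apply_succ_right_lt (h : IsFirstGap f g k l) (hg : Antitone g)
    (hdom : ∀ d, ∑ i ∈ range d, f i ≤ ∑ i ∈ range d, g i) : f (l + 1) < f l :=
  calc f (l + 1) ≤ g (l + 1) := h.apply_succ_right_le hdom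
    _ ≤ g l := hg l.le_succ
    _ < f l := h.apply_right_lt hdom

theorem apply_left_lt (h : IsFirstGap f g k l) (hg : Antitone g) {i : ℕ} (hi : i < k) :
    f k < f i :=
  calc f k < g k := h.apply_lt
    _ ≤ g i := hg hi.le
    _ = f i := (h.eq_of_lt i hi).symm

theorem sum_range_moveUnit_le (h : IsFirstGap f g k l)
    (hdom : ∀ d, ∑ i ∈ range d, f i ≤ ∑ i ∈ range d, g i) (d : ℕ) :
    ∑ i ∈ range d, moveUnit f k l i ≤ ∑ i ∈ range d, g i := by
  rw [sum_range_moveUnit h.lt (by have := h.apply_right_lt hdom; omega)]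
  split_ifs with hd
  · exact h.sum_range_lt hdom hd.1 hd.2
  · exact hdom d

theorem count_getD_succ_le_one {L L' : List ℕ}
    (h : IsFirstGap (L.getD · 0) (L'.getD · 0) k l) (hf : Antitone (L.getD · 0))
    (hg : Antitone (L'.getD · 0)) (hL'c : ∀ v, L'.count v ≤ 2) :
    L.count (L.getD k 0 + 1) ≤ 1 := by
  by_contra! hc
  obtain ⟨i, j, hij, -, hi, hj⟩ := List.exists_lt_getD_eq_of_two_le_count 0 hc
  have hjk : j < k := by
    by_contra! hkj
    have : L.getD j 0 ≤ L.getD k 0 := hf hkj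
    omega
  have hgi : L'.getD i 0 = L.getD k 0 + 1 := (h.eq_of_lt i (by omega)).symm.trans hi
  have hgj : L'.getD j 0 = L.getD k 0 + 1 := (h.eq_of_lt j hjk).symm.trans hj
  have hgk : L'.getD k 0 = L.getD k 0 + 1 := le_antisymm (hgj ▸ hg hjk.le) h.apply_lt
  have hkL' : k < L'.length := by
    by_contra! hk
    rw [List.getD_eq_default _ _ hk] at hgk
    omega
  have := List.three_le_count_of_getD_eq hij hjk hkL' hgi hgj hgk
  have := hL'c (L.getD k 0 + 1)
  omega

theorem count_getD_pred_le_one {L L' : List ℕ}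
    (h : IsFirstGap (L.getD · 0) (L'.getD · 0) k l)
    (hf : Antitone (L.getD · 0)) (hg : Antitone (L'.getD · 0))
    (hdom : ∀ d, ∑ i ∈ range d, L.getD i 0 ≤ ∑ i ∈ range d, L'.getD i 0)
    (hlen : L.length ≤ L'.length) (hL'c : ∀ v, L'.count v ≤ 2) :
    L.count (L.getD l 0 - 1) ≤ 1 := by
  by_contra! hc
  obtain ⟨i, j, hij, hjL, hi, hj⟩ := List.exists_lt_getD_eq_of_two_le_count 0 hc
  have hgl : L'.getD l 0 < L.getD l 0 := h.apply_right_lt hdom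
  have hli : l < i := by
    by_contra! hil
    have : L.getD l 0 ≤ L.getD i 0 := hf hil
    omega
  have hf1 : L.getD (l + 1) 0 = L.getD l 0 - 1 := by
    have : L.getD i 0 ≤ L.getD (l + 1) 0 := hf hli
    have : L.getD (l + 1) 0 < L.getD l 0 := h.apply_succ_right_lt hg hdom
    omega
  have hf2 : L.getD (l + 2) 0 = L.getD l 0 - 1 := by
    have : L.getD j 0 ≤ L.getD (l + 2) 0 := hf (by omega)
    have : L.getD (l + 2) 0 ≤ L.getD (l + 1) 0 := hf (by omega)
    omega
  have hg1 : L'.getD (l + 1) 0 = L.getD l 0 - 1 := by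
    have : L.getD (l + 1) 0 ≤ L'.getD (l + 1) 0 := h.apply_succ_right_le hdom
    have : L'.getD (l + 1) 0 ≤ L'.getD l 0 := hg (by omega)
    omega
  have hg0 : L'.getD l 0 = L.getD l 0 - 1 := by
    have : L'.getD (l + 1) 0 ≤ L'.getD l 0 := hg (by omega)
    omega
  have hg2 : L'.getD (l + 2) 0 = L.getD l 0 - 1 := by
    have : L.getD (l + 2) 0 ≤ L'.getD (l + 2) 0 := apply_le_of_sum_range_eq hdom (by
      rw [sum_range_succ _ (l + 1), sum_range_succ _ (l + 1), h.sum_range_eq, hf1, hg1])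
    have : L'.getD (l + 2) 0 ≤ L'.getD (l + 1) 0 := hg (by omega)
    omega
  have := List.three_le_count_of_getD_eq (l.lt_add_one) (by omega : l + 1 < l + 2) (by omega)
    hg0 hg1 hg2
  have := hL'c (L.getD l 0 - 1)
  omega

end IsFirstGap

theorem lDom_iff_sum_range_getD {L L' : List ℕ} :
    LDom L L' ↔ ∀ d, ∑ i ∈ range d, L.getD i 0 ≤ ∑ i ∈ range d, L'.getD i 0 := by
  simp only [LDom, List.sum_take_eq_sum_range_getD]

theorem intermediate_multiset_construction_general (m : ℕ) (L L' : List ℕ)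
    (hLm : L.length = m) (hL'm : L'.length = m)
    (hLs : List.Pairwise (· ≥ ·) L) (hL's : List.Pairwise (· ≥ ·) L')
    (hLc : ∀ v, L.count v ≤ 2) (hL'c : ∀ v, L'.count v ≤ 2)
    (hdom : LDom L L')
    (k : ℕ) (hk : L.getD k 0 < L'.getD k 0)
    (hkmin : ∀ i, i < k → L.getD i 0 = L'.getD i 0)
    (l : ℕ) (hkl : k < l) (hlm : l < m)
    (hl : (L.take (l + 1)).sum = (L'.take (l + 1)).sum)
    (hlmin : ∀ j, k < j → j < l → (L.take (j + 1)).sum ≠ (L'.take (j + 1)).sum) :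
    List.Pairwise (· ≥ ·) ((L.set k (L.getD k 0 + 1)).set l (L.getD l 0 - 1)) ∧
    (∀ v, ((L.set k (L.getD k 0 + 1)).set l (L.getD l 0 - 1)).count v ≤ 2) ∧
    LDom L ((L.set k (L.getD k 0 + 1)).set l (L.getD l 0 - 1)) ∧
    LDom ((L.set k (L.getD k 0 + 1)).set l (L.getD l 0 - 1)) L' := by
  simp only [List.sum_take_eq_sum_range_getD] at hl hlmin
  have h : IsFirstGap (L.getD · 0) (L'.getD · 0) k l := ⟨hkmin, hk, hkl, hl, hlmin⟩
  rw [List.pairwise_ge_iff_antitone_getD] at hLs hL's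
  rw [lDom_iff_sum_range_getD] at hdom
  have hgl : L'.getD l 0 < L.getD l 0 := h.apply_right_lt hdom
  have hlk : L.getD l 0 ≤ L.getD k 0 := hLs hkl.le
  have hset : (((L.set k (L.getD k 0 + 1)).set l (L.getD l 0 - 1)).getD · 0) =
      moveUnit (L.getD · 0) k l := by
    rw [List.getD_set_of_lt _ _ (by simp; omega), List.getD_set_of_lt _ _ (by omega)]
    rfl
  refine ⟨?_, ?_, ?_, ?_⟩
  · rw [List.pairwise_ge_iff_antitone_getD, hset]
    exact antitone_moveUnit hLs hkl (fun _ => h.apply_left_lt hL's)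
      (h.apply_succ_right_lt hL's hdom)
  · exact List.count_set_set_le_two (by omega) hLc (h.count_getD_succ_le_one hLs hL's hL'c)
      (h.count_getD_pred_le_one hLs hL's hdom (by omega) hL'c) k l
  · rw [lDom_iff_sum_range_getD, hset]
    intro d
    rw [sum_range_moveUnit hkl (by omega)]
    omega
  · rw [lDom_iff_sum_range_getD, hset]
    exact h.sum_range_moveUnit_le hdom

theorem intermediate_multiset_construction (m : ℕ) (L L' : List ℕ)
    (hLm : L.length = m) (hL'm : L'.length = m)
    (hLs : List.Pairwise (· ≥ ·) L) (hL's : List.Pairwise (· ≥ ·) L')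
    (hsum : L.sum = L'.sum)
    (hLc : ∀ v, L.count v ≤ 2) (hL'c : ∀ v, L'.count v ≤ 2)
    (hdom : LDom L L') (hne : L ≠ L')
    (k : ℕ) (hk : L.getD k 0 < L'.getD k 0)
    (hkmin : ∀ i, i < k → L.getD i 0 = L'.getD i 0)
    (l : ℕ) (hkl : k < l) (hlm : l < m)
    (hl : (L.take (l + 1)).sum = (L'.take (l + 1)).sum)
    (hlmin : ∀ j, k < j → j < l → (L.take (j + 1)).sum ≠ (L'.take (j + 1)).sum) :
    List.Pairwise (· ≥ ·) ((L.set k (L.getD k 0 + 1)).set l (L.getD l 0 - 1)) ∧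
    (∀ v, ((L.set k (L.getD k 0 + 1)).set l (L.getD l 0 - 1)).count v ≤ 2) ∧
    LDom L ((L.set k (L.getD k 0 + 1)).set l (L.getD l 0 - 1)) ∧
    LDom ((L.set k (L.getD k 0 + 1)).set l (L.getD l 0 - 1)) L' :=
  intermediate_multiset_construction_general m L L' hLm hL'm hLs hL's hLc hL'c hdom k hk hkmin l hkl
    hlm hl hlmin
end

section
/- Define the dominance order on bipartitions of n by (λ,μ) ⊴ (λ',μ') iff Σ_{i≤d} λ_i ≤ Σ_{i≤d} λ'_i for all d and |λ| + Σ_{i≤d} μ_i ≤ |λ'| + Σ_{i≤d} μ'_i for all d. Then (λ,μ) ⊴ (λ',μ') if and only if λ ⊴ λ' and μ̄' ⊴ μ̄, where ⊴ between partitions of possibly different numbers means all partial sums of the first are at most those of the second, and μ̄ denotes the conjugate of μ. -/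
/-!
The number of cells of the Young diagram of `μ` outside its first `k` columns is
`excess μ k = ∑ᵢ (μᵢ - k)₊`, so `|μ| = ∑_{j<k} μ̄ⱼ + excess μ k`. For a partition the partial sums
and the excesses determine each other by a Legendre-type duality,
`∑_{i<d} μᵢ = min_k (excess μ k + d·k)` and `excess μ k = max_d (∑_{i<d} μᵢ - d·k)`,
the extremum being attained at `k = μ_d`, resp. `d = μ̄_k`. Hence dominance of the shifted partial
sums of `μ` is the same as the reverse dominance of the excesses, i.e. of the partial sums of the
conjugates; the constant total `|λ| + |μ|` supplies the shifts.
-/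

/-- Partial sum of the first `d` parts of a partition (given as a function). -/
def psum (f : ℕ → ℕ) (d : ℕ) : ℕ := ∑ i ∈ Finset.range d, f i

/-- Dominance order between partitions of possibly different numbers:
all partial sums of the first are at most those of the second. -/
def Dom (f g : ℕ → ℕ) : Prop := ∀ d, psum f d ≤ psum g d

/-- Conjugate partition: (conj f) j = #{i : f i ≥ j+1}  (0-indexed parts). -/
noncomputable def conj (f : ℕ → ℕ) (j : ℕ) : ℕ := Set.ncard {i | j < f i}

/-- Dominance order on bipartitions (Dipper–James–Murphy). -/
noncomputable def BDom (l m l' m' : ℕ → ℕ) : Prop :=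
  (∀ d, psum l d ≤ psum l' d) ∧
  ∀ d, (∑ᶠ i, l i) + psum m d ≤ (∑ᶠ i, l' i) + psum m' d

open Finset Function

noncomputable def excess (f : ℕ → ℕ) (k : ℕ) : ℕ := ∑ᶠ i, (f i - k)

lemma support_finite_of_forall_le_eq_zero {M : Type*} [Zero M] {f : ℕ → M} {N : ℕ}
    (h : ∀ i, N ≤ i → f i = 0) : (support f).Finite :=
  (Set.finite_Iio N).subset fun i hi => not_le.1 fun hNi => hi (h i hNi)

lemma support_tsub_subset (f : ℕ → ℕ) (k : ℕ) : support (fun i => f i - k) ⊆ support f :=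
  fun i hi hfi => hi (by simp [hfi])

lemma conj_eq_card_filter {f : ℕ → ℕ} {s : Finset ℕ} (hs : support f ⊆ s) (j : ℕ) :
    conj f j = #(s.filter (j < f ·)) := by
  rw [conj, ← Set.ncard_coe_finset, coe_filter]
  congr 1
  ext i
  exact ⟨fun hi => ⟨hs (Nat.ne_zero_of_lt hi), hi⟩, And.right⟩

lemma psum_conj {f : ℕ → ℕ} {s : Finset ℕ} (hs : support f ⊆ s) (k : ℕ) :
    psum (conj f) k = ∑ i ∈ s, min (f i) k := by
  simp only [psum, conj_eq_card_filter hs, card_filter]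
  rw [sum_comm]
  refine sum_congr rfl fun i _ => ?_
  rw [← card_filter, ← card_range (min (f i) k)]
  congr 1
  ext j
  simp [and_comm]

theorem finsum_eq_psum_conj_add_excess {f : ℕ → ℕ} (hf : (support f).Finite) (k : ℕ) :
    ∑ᶠ i, f i = psum (conj f) k + excess f k := by
  have hs : support f ⊆ hf.toFinset := by simp
  rw [excess, finsum_eq_sum_of_support_subset f hs,
    finsum_eq_sum_of_support_subset _ ((support_tsub_subset f k).trans hs), psum_conj hs,
    ← sum_add_distrib]
  exact sum_congr rfl fun i _ => by omega

lemma sum_range_tsub_le_excess {f : ℕ → ℕ} (hf : (support f).Finite) (d k : ℕ) :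
    ∑ i ∈ range d, (f i - k) ≤ excess f k := by
  have hs : support (fun i => f i - k) ⊆ ↑(range d ∪ hf.toFinset) :=
    (support_tsub_subset f k).trans (by simp)
  rw [excess, finsum_eq_sum_of_support_subset _ hs]
  exact sum_le_sum_of_subset subset_union_left

lemma psum_le_excess_add {f : ℕ → ℕ} (hf : (support f).Finite) (d k : ℕ) :
    psum f d ≤ excess f k + d * k :=
  calc psum f d ≤ ∑ i ∈ range d, ((f i - k) + k) := sum_le_sum fun i _ => by omega
    _ = ∑ i ∈ range d, (f i - k) + d * k := by simp [sum_add_distrib]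
    _ ≤ excess f k + d * k := by grw [sum_range_tsub_le_excess hf]

lemma psum_eq_excess_add_of_threshold {f : ℕ → ℕ} {d k : ℕ} (hlt : ∀ i < d, k ≤ f i)
    (hge : ∀ i, d ≤ i → f i ≤ k) : psum f d = excess f k + d * k := by
  have hs : support (fun i => f i - k) ⊆ ↑(range d) := fun i hi => by
    by_contra hid
    exact hi (Nat.sub_eq_zero_of_le (hge i (by simpa using hid)))
  rw [excess, finsum_eq_sum_of_support_subset _ hs, psum]
  calc ∑ i ∈ range d, f i = ∑ i ∈ range d, ((f i - k) + k) :=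
        sum_congr rfl fun i hi => by have := hlt i (mem_range.1 hi); omega
    _ = ∑ i ∈ range d, (f i - k) + d * k := by simp [sum_add_distrib]

lemma lt_conj_iff {f : ℕ → ℕ} (hf : Antitone f) (hfin : (support f).Finite) (k i : ℕ) :
    i < conj f k ↔ k < f i := by
  have hlower : IsLowerSet {i | k < f i} := fun _ _ hba ha => lt_of_lt_of_le ha (hf hba)
  rcases hlower.eq_univ_or_Iio with huniv | ⟨a, hIio⟩
  · have : {i | k < f i}.Finite := hfin.subset fun i (hi : k < f i) => Nat.ne_zero_of_lt hi
    exact absurd (huniv ▸ this) Set.infinite_univ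
  · rw [conj, hIio, Set.ncard_Iio_nat, ← Set.mem_Iio, ← hIio, Set.mem_ofPred_eq]

theorem forall_psum_add_le_iff_forall_excess_add_le {m m' : ℕ → ℕ} (hm : Antitone m)
    (hm' : Antitone m') (hfin : (support m).Finite) (hfin' : (support m').Finite) (a b : ℕ) :
    (∀ d, psum m d + a ≤ psum m' d + b) ↔ ∀ k, excess m k + a ≤ excess m' k + b := by
  constructor
  · intro h k
    have hD : psum m (conj m k) = excess m k + conj m k * k :=
      psum_eq_excess_add_of_threshold (fun i hi => ((lt_conj_iff hm hfin k i).1 hi).le)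
        fun i hi => not_lt.1 fun hki => hi.not_gt ((lt_conj_iff hm hfin k i).2 hki)
    have := h (conj m k)
    have := psum_le_excess_add hfin' (conj m k) k
    omega
  · intro h d
    have hd : psum m' d = excess m' (m' d) + d * m' d :=
      psum_eq_excess_add_of_threshold (fun _ hi => hm' hi.le) fun _ hi => hm' hi
    have := h (m' d)
    have := psum_le_excess_add hfin d (m' d)
    omega

theorem bipartition_dominance_iff_general (n : ℕ) (l m l' m' : ℕ → ℕ)
    (hm : Antitone m) (hm' : Antitone m')
    (hm0 : ∃ N, ∀ i, N ≤ i → m i = 0)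
    (hm'0 : ∃ N, ∀ i, N ≤ i → m' i = 0)
    (hn : (∑ᶠ i, l i) + (∑ᶠ i, m i) = n)
    (hn' : (∑ᶠ i, l' i) + (∑ᶠ i, m' i) = n) :
    BDom l m l' m' ↔ (Dom l l' ∧ Dom (conj m') (conj m)) := by
  obtain ⟨N, hN⟩ := hm0
  obtain ⟨N', hN'⟩ := hm'0
  have hfin := support_finite_of_forall_le_eq_zero hN
  have hfin' := support_finite_of_forall_le_eq_zero hN'
  refine and_congr_right fun _ => ?_
  calc (∀ d, (∑ᶠ i, l i) + psum m d ≤ (∑ᶠ i, l' i) + psum m' d)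
      ↔ ∀ d, psum m d + ∑ᶠ i, m' i ≤ psum m' d + ∑ᶠ i, m i := forall_congr' fun _ => by omega
    _ ↔ ∀ k, excess m k + ∑ᶠ i, m' i ≤ excess m' k + ∑ᶠ i, m i :=
      forall_psum_add_le_iff_forall_excess_add_le hm hm' hfin hfin' _ _
    _ ↔ Dom (conj m') (conj m) := forall_congr' fun k => by
      have := finsum_eq_psum_conj_add_excess hfin k
      have := finsum_eq_psum_conj_add_excess hfin' k
      omega

theorem bipartition_dominance_iff (n : ℕ) (l m l' m' : ℕ → ℕ)
    (hl : Antitone l) (hm : Antitone m) (hl' : Antitone l') (hm' : Antitone m')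
    (hl0 : ∃ N, ∀ i, N ≤ i → l i = 0) (hm0 : ∃ N, ∀ i, N ≤ i → m i = 0)
    (hl'0 : ∃ N, ∀ i, N ≤ i → l' i = 0) (hm'0 : ∃ N, ∀ i, N ≤ i → m' i = 0)
    (hn : (∑ᶠ i, l i) + (∑ᶠ i, m i) = n)
    (hn' : (∑ᶠ i, l' i) + (∑ᶠ i, m' i) = n) :
    BDom l m l' m' ↔ (Dom l l' ∧ Dom (conj m') (conj m)) :=
  bipartition_dominance_iff_general n l m l' m' hm hm' hm0 hm'0 hn hn'
end

section
/- Fix a = 1, b = n − 1 (so r = n−1, b' = 0) and N = n. For the bipartition (λ,μ) = ((1^k),(l)) of n with k + l = n, the multiset Z^n_{1,n-1}((1^k),(l)) with entries λ_i + 2n−1−i (1 ≤ i ≤ 2n−1) and μ_j + n − j (1 ≤ j ≤ n) equals {0,0,1,1,…,n−2,n−2, n−1, n, n+1, …, 2n−1}, independently of k. In particular, all bipartitions of the form ((1^k),(l)) with k + l = n yield the same multiset. -/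
private lemma range_eq_Ico_zero (t : ℕ) : Multiset.range t = Multiset.Ico 0 t := by
  rw [← Finset.range_val, Finset.range_eq_Ico]; rfl

private lemma ico_singleton (a : ℕ) : Multiset.Ico a (a + 1) = ({a} : Multiset ℕ) := by
  show (Finset.Ico a (a + 1)).val = _
  rw [Finset.Ico_add_one_right_eq_Icc, Finset.Icc_self]; rfl

private lemma map_sub_range (c m : ℕ) (h : m ≤ c + 1) :
    (Multiset.range m).map (fun i => c - i) = Multiset.Ico (c + 1 - m) (c + 1) := by
  induction m with
  | zero => simp
  | succ m ih =>
    rw [Multiset.range_succ, Multiset.map_cons, ih (by omega),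
      show c + 1 - m = (c - m) + 1 from by omega,
      show c + 1 - (m + 1) = c - m from by omega,
      ← Multiset.singleton_add, ← ico_singleton (c - m)]
    exact Multiset.Ico_add_Ico_eq_Ico (by omega) (by omega)

theorem subasymptotic_family_multiset (n k l : ℕ) (hn : 1 ≤ n) (hkl : k + l = n) :
    ((Finset.range (2 * n - 1)).val.map
        (fun i => (if i < k then 1 else 0) + (2 * n - 2 - i))) +
      ((Finset.range n).val.map
        (fun j => (if j = 0 then l else 0) + (n - 1 - j)))
      = (Finset.range (n - 1)).val + (Finset.range (n - 1)).val +
        (Finset.Ico (n - 1) (2 * n)).val := by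
  rcases eq_or_lt_of_le hn with h1 | h2
  · -- n = 1
    obtain rfl : n = 1 := h1.symm
    rcases (by omega : k = 0 ∨ k = 1) with rfl | rfl
    · obtain rfl : l = 1 := by omega
      decide
    · obtain rfl : l = 0 := by omega
      decide
  · -- 2 ≤ n
    have hk : k ≤ n := by omega
    simp only [Finset.range_val]
    have A : (Multiset.range (2 * n - 1)).map
        (fun i => (if i < k then 1 else 0) + (2 * n - 2 - i))
        = Multiset.Ico (2 * n - k) (2 * n) + Multiset.Ico 0 (2 * n - 1 - k) := by
      conv_lhs => rw [show 2 * n - 1 = k + (2 * n - 1 - k) from by omega]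
      rw [Multiset.range_add, Multiset.map_add, Multiset.map_map]
      have p1 : (Multiset.range k).map
          (fun i => (if i < k then 1 else 0) + (2 * n - 2 - i))
          = (Multiset.range k).map (fun i => (2 * n - 1) - i) := by
        refine Multiset.map_congr rfl ?_
        intro x hx
        rw [Multiset.mem_range] at hx
        simp only [if_pos hx]
        omega
      have p2 : (Multiset.range (2 * n - 1 - k)).map
          ((fun i => (if i < k then 1 else 0) + (2 * n - 2 - i)) ∘ (fun x => k + x))
          = (Multiset.range (2 * n - 1 - k)).map (fun i => (2 * n - 2 - k) - i) := by
        refine Multiset.map_congr rfl ?_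
        intro x hx
        simp only [Function.comp_apply, if_neg (by omega : ¬ k + x < k)]
        omega
      rw [p1, p2, map_sub_range _ _ (by omega), map_sub_range _ _ (by omega)]
      congr 1 <;> [skip; skip] <;> congr 1 <;> omega
    have B : (Multiset.range n).map (fun j => (if j = 0 then l else 0) + (n - 1 - j))
        = ({2 * n - 1 - k} : Multiset ℕ) + Multiset.Ico 0 (n - 1) := by
      have hr : Multiset.range n
          = Multiset.range 1 + (Multiset.range (n - 1)).map (fun x => 1 + x) := by
        conv_lhs => rw [show n = 1 + (n - 1) from by omega]
        exact Multiset.range_add 1 (n - 1)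
      rw [hr, Multiset.map_add, Multiset.map_map]
      have p3 : (Multiset.range 1).map (fun j => (if j = 0 then l else 0) + (n - 1 - j))
          = ({2 * n - 1 - k} : Multiset ℕ) := by
        have h0 : Multiset.range 1 = ({0} : Multiset ℕ) := rfl
        rw [h0, Multiset.map_singleton]
        have : (if (0 : ℕ) = 0 then l else 0) + (n - 1 - 0) = 2 * n - 1 - k := by
          simp; omega
        rw [this]
      have p4 : (Multiset.range (n - 1)).map
          ((fun j => (if j = 0 then l else 0) + (n - 1 - j)) ∘ (fun x => 1 + x))
          = (Multiset.range (n - 1)).map (fun j => (n - 2) - j) := by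
        refine Multiset.map_congr rfl ?_
        intro x hx
        simp only [Function.comp_apply, if_neg (by omega : ¬ 1 + x = 0)]
        omega
      rw [p3, p4, map_sub_range _ _ (by omega)]
      congr 2 <;> omega
    rw [A, B, range_eq_Ico_zero (n - 1)]
    have hsplit : Multiset.Ico 0 (2 * n - 1 - k)
        = Multiset.Ico 0 (n - 1) + Multiset.Ico (n - 1) (2 * n - 1 - k) :=
      (Multiset.Ico_add_Ico_eq_Ico (by omega) (by omega)).symm
    have hsing : ({2 * n - 1 - k} : Multiset ℕ) = Multiset.Ico (2 * n - 1 - k) (2 * n - k) := by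
      rw [show 2 * n - k = (2 * n - 1 - k) + 1 from by omega, ico_singleton]
    have hjoin : Multiset.Ico (n - 1) (2 * n - 1 - k) + Multiset.Ico (2 * n - 1 - k) (2 * n - k)
        + Multiset.Ico (2 * n - k) (2 * n) = Multiset.Ico (n - 1) (2 * n) := by
      rw [Multiset.Ico_add_Ico_eq_Ico (by omega) (by omega),
        Multiset.Ico_add_Ico_eq_Ico (by omega) (by omega)]
    have hIcoval : (Finset.Ico (n - 1) (2 * n)).val = Multiset.Ico (n - 1) (2 * n) := rfl
    rw [hsplit, hsing, hIcoval, ← hjoin]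
    abel
end

section
/- Let Z = {u_1 ≥ … ≥ u_m} be a multiset of nonnegative integers with u_i − u_{i+2} ≥ a for all i (where a > 0). Let δ_1,…,δ_m ∈ {0,1} with exactly l ones, and consider the multiset Z' = {u_i + δ_i a : 1 ≤ i ≤ m} with decreasing rearrangement z_1 ≥ … ≥ z_m. Then for all 1 ≤ d ≤ m: Σ_{i≤d} z_i ≤ min{d,l}·a + Σ_{i≤d} u_i. -/
theorem dsort_perm (l : List ℕ) : (dsort l).Perm l :=
  (List.reverse_perm _).trans (Multiset.coe_eq_coe.mp (Multiset.sort_eq _ _))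

namespace List

variable {α β M : Type*}

theorem map_fst_zip_sublist : ∀ (l₁ : List α) (l₂ : List β), (l₁.zip l₂).map Prod.fst <+ l₁
  | [], _ => by simp
  | _ :: _, [] => by simp
  | a :: l₁, _ :: l₂ => by simpa using (map_fst_zip_sublist l₁ l₂).cons_cons a

theorem map_snd_zip_sublist : ∀ (l₁ : List α) (l₂ : List β), (l₁.zip l₂).map Prod.snd <+ l₂
  | [], _ => by simp
  | _ :: _, [] => by simp
  | _ :: l₁, b :: l₂ => by simpa using (map_snd_zip_sublist l₁ l₂).cons_cons b

section CanonicallyOrdered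

variable [AddCommMonoid M] [PartialOrder M] [CanonicallyOrderedAdd M] [IsOrderedAddMonoid M]

theorem sum_take_le_sum_take_cons {x : M} {u : List M} (hx : ∀ y ∈ u, y ≤ x) :
    ∀ k, (u.take k).sum ≤ ((x :: u).take k).sum
  | 0 => by simp
  | k + 1 => by
    have hlast : (u[k]?).toList.sum ≤ x := by
      cases h : u[k]? with
      | none => simp
      | some y => simpa using hx y (mem_of_getElem? h)
    rw [take_add_one, take_succ_cons, sum_append, sum_cons, add_comm x]
    gcongr

theorem Sublist.sum_le_sum_take_of_pairwise_ge {s u : List M} (hs : s <+ u)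
    (hu : u.Pairwise (· ≥ ·)) : s.sum ≤ (u.take s.length).sum := by
  induction hs with
  | slnil => simp
  | cons x _ ih =>
    exact (ih (pairwise_cons.1 hu).2).trans
      (sum_take_le_sum_take_cons (pairwise_cons.1 hu).1 _)
  | cons_cons x _ ih =>
    simpa using add_le_add_right (ih (pairwise_cons.1 hu).2) x

end CanonicallyOrdered

theorem Sublist.sum_le_min_of_le_one {s δ : List ℕ} (hs : s <+ δ) (hδ : ∀ x ∈ δ, x ≤ 1) :
    s.sum ≤ min s.length δ.sum :=
  le_min (by simpa using sum_le_card_nsmul s 1 fun x hx => hδ x (hs.subset hx))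
    (hs.sum_le_sum fun x _ => x.zero_le)

end List

open List

theorem sum_le_of_sublist_zipWith {a : ℕ} {u δ s : List ℕ} (hu : u.Pairwise (· ≥ ·))
    (hδ : ∀ x ∈ δ, x ≤ 1) (hs : s <+ zipWith (fun x y => x + y * a) u δ) :
    s.sum ≤ min s.length δ.sum * a + (u.take s.length).sum := by
  rw [← map_uncurry_zip_eq_zipWith] at hs
  obtain ⟨p, hp, rfl⟩ := sublist_map_iff.mp hs
  have hu' : (p.map Prod.fst).sum ≤ (u.take p.length).sum := by
    simpa using
      ((hp.map Prod.fst).trans (map_fst_zip_sublist u δ)).sum_le_sum_take_of_pairwise_ge hu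
  have hδ' : (p.map Prod.snd).sum ≤ min p.length δ.sum := by
    simpa using ((hp.map Prod.snd).trans (map_snd_zip_sublist u δ)).sum_le_min_of_le_one hδ
  have hsum : (p.map (Function.uncurry fun x y => x + y * a)).sum
      = (p.map Prod.snd).sum * a + (p.map Prod.fst).sum := by
    simp only [Function.uncurry_def, sum_map_add, sum_map_mul_right, add_comm]
  rw [hsum, length_map]
  gcongr

theorem pieri_partial_sum_estimate_general (a lnum : ℕ)
    (u δ : List ℕ)
    (hu : List.Pairwise (· ≥ ·) u)
    (hδ : ∀ x ∈ δ, x ≤ 1) (hδsum : δ.sum = lnum) :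
    ∀ d,
      ((dsort (↑(List.zipWith (fun x y => x + y * a) u δ) : Multiset ℕ)).take d).sum
        ≤ min d lnum * a + (u.take d).sum := by
  intro d
  set v := zipWith (fun x y => x + y * a) u δ
  obtain ⟨s, hperm, hsub⟩ : (dsort v).take d <+~ v :=
    (take_sublist d _).subperm.trans (dsort_perm v).subperm
  have hlen : s.length ≤ d := hperm.length_eq ▸ length_take_le d _
  calc ((dsort v).take d).sum = s.sum := hperm.sum_eq.symm
    _ ≤ min s.length lnum * a + (u.take s.length).sum :=
      hδsum ▸ sum_le_of_sublist_zipWith hu hδ hsub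
    _ ≤ min d lnum * a + (u.take d).sum := by
      gcongr
      exact (take_sublist_take_left hlen).sum_le_sum fun x _ => x.zero_le

theorem pieri_partial_sum_estimate (a lnum : ℕ) (ha : 0 < a)
    (u δ : List ℕ)
    (hu : List.Pairwise (· ≥ ·) u)
    (hgap : ∀ i, i + 2 < u.length → u.getD (i + 2) 0 + a ≤ u.getD i 0)
    (hδlen : δ.length = u.length) (hδ : ∀ x ∈ δ, x ≤ 1) (hδsum : δ.sum = lnum) :
    ∀ d,
      ((dsort (↑(List.zipWith (fun x y => x + y * a) u δ) : Multiset ℕ)).take d).sum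
        ≤ min d lnum * a + (u.take d).sum :=
  pieri_partial_sum_estimate_general a lnum u δ hu hδ hδsum
end

section
/- Let (z_i)_{1≤i≤2N+1} be a weakly decreasing sequence of nonnegative integers arising from a (1,1)-special bipartition, i.e., z_{2i-1} = λ_i + N + 1 − i and z_{2i} = μ_i + N − i with λ_i + 1 ≥ μ_i ≥ λ_{i+1} for all i. Define z̃_i = 2z_i + 1 if (i odd and z_{i−1} > z_i) or (i even and z_i = z_{i+1}), and z̃_i = 2z_i otherwise. Then z̃_1 ≥ z̃_2 ≥ … ≥ z̃_{2N+1}, and for each d, Σ_{i≤d} z̃_i = ε_d + ⌊(d+1)/2⌋ + 2·Σ_{i≤d} z_i, where ε_d = 1 if d is even and z_d = z_{d+1}, and ε_d = 0 otherwise. -/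
/-!
The bonus bits `z̃ᵢ - 2 zᵢ ∈ {0, 1}` can only break monotonicity on a plateau `zᵢ = zᵢ₊₁`. For even
`i` the bonus of `z̃ᵢ` absorbs it; for odd `i = 2j - 1` the next bonus would need `z_{2j} = z_{2j+1}`,
impossible since `z_{2j-1} - z_{2j+1} = λⱼ - λⱼ₊₁ + 1 > 0`. For the partial sums, at each odd index
`2j + 1 ≥ 3` exactly one of `z_{2j} = z_{2j+1}` (the bonus of `2j`) and `z_{2j+1} < z_{2j}` (the bonus
of `2j + 1`) holds, so up to `d` the bonuses number `⌊(d + 1)/2⌋`, plus `ε_d` when an even `d` has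
been paid before its partner `d + 1`.
-/

/-- `z̃ᵢ - 2 zᵢ`; the clause `i = 1` encodes the convention `z₀ = +∞`. -/
def doublingBit (z : ℕ → ℕ) (i : ℕ) : ℕ :=
  if (i % 2 = 1 ∧ (i = 1 ∨ z i < z (i - 1))) ∨ (i % 2 = 0 ∧ z i = z (i + 1)) then 1 else 0

section Doubling

variable {z : ℕ → ℕ}

theorem sum_doublingBit {M : ℕ} (hanti : ∀ i, 1 ≤ i → i + 1 ≤ M → z (i + 1) ≤ z i)
    {d : ℕ} (hd : 1 ≤ d) (hdM : d ≤ M) :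
    ∑ i ∈ Finset.Icc 1 d, doublingBit z i =
      (if d % 2 = 0 ∧ z d = z (d + 1) then 1 else 0) + (d + 1) / 2 := by
  induction d, hd using Nat.le_induction with
  | base =>
    rw [Finset.Icc_self, Finset.sum_singleton]
    simp [doublingBit]
  | succ d hd ih =>
    rw [Finset.sum_Icc_succ_top (by omega), ih (by omega)]
    have hstep := hanti d hd (by omega)
    unfold doublingBit
    simp only [Nat.add_sub_cancel]
    split_ifs <;> omega

theorem two_mul_add_doublingBit_succ_le {N : ℕ}
    (hanti : ∀ i, 1 ≤ i → i + 1 ≤ 2 * N + 1 → z (i + 1) ≤ z i)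
    (hdrop : ∀ i, i % 2 = 1 → i + 2 ≤ 2 * N + 1 → z (i + 2) < z i)
    {i : ℕ} (hi : 1 ≤ i) (hiN : i + 1 ≤ 2 * N + 1) :
    2 * z (i + 1) + doublingBit z (i + 1) ≤ 2 * z i + doublingBit z i := by
  have hstep := hanti i hi hiN
  -- the length `2N + 1` is odd, so an odd `i` is never the second-to-last index
  have hplateau : i % 2 = 1 → z (i + 2) < z i := fun hodd => hdrop i hodd (by omega)
  unfold doublingBit
  simp only [Nat.add_sub_cancel, Nat.add_assoc, Nat.reduceAdd]
  split_ifs <;> omega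

end Doubling

section SpecialBipartition

variable {N : ℕ} {l m z : ℕ → ℕ}

theorem z_odd_eq (hzodd : ∀ i, 1 ≤ i → i ≤ N + 1 → z (2 * i - 1) = l (i - 1) + N + 1 - i)
    {k : ℕ} (hk : k ≤ N) : z (2 * k + 1) = l k + N - k := by
  have h := hzodd (k + 1) (by omega) (by omega)
  rwa [show 2 * (k + 1) - 1 = 2 * k + 1 by omega, Nat.add_sub_cancel,
    show l k + N + 1 - (k + 1) = l k + N - k by omega] at h

theorem z_even_eq (hzeven : ∀ i, 1 ≤ i → i ≤ N → z (2 * i) = m (i - 1) + N - i)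
    {k : ℕ} (hk : k < N) : z (2 * k + 2) = m k + N - (k + 1) := by
  have h := hzeven (k + 1) (by omega) hk
  rwa [Nat.add_sub_cancel] at h

theorem antitone_of_special
    (hsp : ∀ i, i < N → m i ≤ l i + 1 ∧ l (i + 1) ≤ m i)
    (hzodd : ∀ i, 1 ≤ i → i ≤ N + 1 → z (2 * i - 1) = l (i - 1) + N + 1 - i)
    (hzeven : ∀ i, 1 ≤ i → i ≤ N → z (2 * i) = m (i - 1) + N - i)
    {i : ℕ} (hi : 1 ≤ i) (hiN : i + 1 ≤ 2 * N + 1) : z (i + 1) ≤ z i := by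
  obtain ⟨k, rfl | rfl⟩ : ∃ k, i = 2 * k + 1 ∨ i = 2 * k + 2 := ⟨(i - 1) / 2, by omega⟩
  · have := (hsp k (by omega)).1
    rw [z_even_eq hzeven (by omega), z_odd_eq hzodd (by omega)]
    omega
  · have := (hsp k (by omega)).2
    rw [show 2 * k + 2 + 1 = 2 * (k + 1) + 1 by ring, z_odd_eq hzodd (by omega),
      z_even_eq hzeven (by omega)]
    omega

theorem two_step_drop_of_special (hl : Antitone l)
    (hzodd : ∀ i, 1 ≤ i → i ≤ N + 1 → z (2 * i - 1) = l (i - 1) + N + 1 - i)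
    {i : ℕ} (hodd : i % 2 = 1) (hiN : i + 2 ≤ 2 * N + 1) : z (i + 2) < z i := by
  obtain ⟨k, rfl⟩ : ∃ k, i = 2 * k + 1 := ⟨i / 2, by omega⟩
  have : l (k + 1) ≤ l k := hl (Nat.le_add_right k 1)
  rw [show 2 * k + 1 + 2 = 2 * (k + 1) + 1 by ring, z_odd_eq hzodd (by omega),
    z_odd_eq hzodd (by omega)]
  omega

end SpecialBipartition

theorem special_bipartition_doubling_general (N : ℕ) (l m z : ℕ → ℕ)
    (hl : Antitone l)
    (hsp : ∀ i, i < N → m i ≤ l i + 1 ∧ l (i + 1) ≤ m i)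
    (hzodd : ∀ i, 1 ≤ i → i ≤ N + 1 → z (2 * i - 1) = l (i - 1) + N + 1 - i)
    (hzeven : ∀ i, 1 ≤ i → i ≤ N → z (2 * i) = m (i - 1) + N - i) :
    (∀ i, 1 ≤ i → i + 1 ≤ 2 * N + 1 →
      (2 * z (i + 1) +
        (if ((i + 1) % 2 = 1 ∧ (i + 1 = 1 ∨ z (i + 1) < z i)) ∨
            ((i + 1) % 2 = 0 ∧ z (i + 1) = z (i + 2)) then 1 else 0))
      ≤ (2 * z i +
        (if (i % 2 = 1 ∧ (i = 1 ∨ z i < z (i - 1))) ∨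
            (i % 2 = 0 ∧ z i = z (i + 1)) then 1 else 0))) ∧
    (∀ d, 1 ≤ d → d ≤ 2 * N + 1 →
      ∑ i ∈ Finset.Icc 1 d,
        (2 * z i +
          (if (i % 2 = 1 ∧ (i = 1 ∨ z i < z (i - 1))) ∨
              (i % 2 = 0 ∧ z i = z (i + 1)) then 1 else 0))
        = (if d % 2 = 0 ∧ z d = z (d + 1) then 1 else 0) + (d + 1) / 2 +
          2 * ∑ i ∈ Finset.Icc 1 d, z i) := by
  have hanti : ∀ i, 1 ≤ i → i + 1 ≤ 2 * N + 1 → z (i + 1) ≤ z i :=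
    fun i hi hiN => antitone_of_special hsp hzodd hzeven hi hiN
  have hdrop : ∀ i, i % 2 = 1 → i + 2 ≤ 2 * N + 1 → z (i + 2) < z i :=
    fun i hodd hiN => two_step_drop_of_special hl hzodd hodd hiN
  refine ⟨fun i hi hiN => two_mul_add_doublingBit_succ_le hanti hdrop hi hiN, fun d hd hdN => ?_⟩
  change ∑ i ∈ Finset.Icc 1 d, (2 * z i + doublingBit z i) = _
  rw [Finset.sum_add_distrib, ← Finset.mul_sum, sum_doublingBit hanti hd hdN]
  ring

theorem special_bipartition_doubling (n N : ℕ) (l m z : ℕ → ℕ)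
    (hl : Antitone l) (hm : Antitone m)
    (hlN : ∀ i, N + 1 ≤ i → l i = 0) (hmN : ∀ j, N ≤ j → m j = 0)
    (hn : psum l (N + 1) + psum m N = n)
    (hsp : ∀ i, i < N → m i ≤ l i + 1 ∧ l (i + 1) ≤ m i)
    (hzodd : ∀ i, 1 ≤ i → i ≤ N + 1 → z (2 * i - 1) = l (i - 1) + N + 1 - i)
    (hzeven : ∀ i, 1 ≤ i → i ≤ N → z (2 * i) = m (i - 1) + N - i) :
    (∀ i, 1 ≤ i → i + 1 ≤ 2 * N + 1 →
      (2 * z (i + 1) +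
        (if ((i + 1) % 2 = 1 ∧ (i + 1 = 1 ∨ z (i + 1) < z i)) ∨
            ((i + 1) % 2 = 0 ∧ z (i + 1) = z (i + 2)) then 1 else 0))
      ≤ (2 * z i +
        (if (i % 2 = 1 ∧ (i = 1 ∨ z i < z (i - 1))) ∨
            (i % 2 = 0 ∧ z i = z (i + 1)) then 1 else 0))) ∧
    (∀ d, 1 ≤ d → d ≤ 2 * N + 1 →
      ∑ i ∈ Finset.Icc 1 d,
        (2 * z i +
          (if (i % 2 = 1 ∧ (i = 1 ∨ z i < z (i - 1))) ∨
              (i % 2 = 0 ∧ z i = z (i + 1)) then 1 else 0))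
        = (if d % 2 = 0 ∧ z d = z (d + 1) then 1 else 0) + (d + 1) / 2 +
          2 * ∑ i ∈ Finset.Icc 1 d, z i) :=
  special_bipartition_doubling_general N l m z hl hsp hzodd hzeven
end
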